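/- For all positive invertible bounded operators A and B on a complex Hilbert space, (A ∇ B) ♯ (A ! B) = A ♯ B. -/

import Mathlib

/-!
`A ♯ B` is the unique positive solution `X` of the Riccati equation `X A⁻¹ X = B`: conjugating
by `A^{-1/2}` turns it into `Y² = A^{-1/2} B A^{-1/2}`, whose unique positive solution is the
square root. For `G = A ♯ B`, inverting `G A⁻¹ G = B` gives `G B⁻¹ G = A`, so conjugation by
`G⁻¹` sends `A` and `B` to `B⁻¹` and `A⁻¹`, hence `A ∇ B` to `(A ! B)⁻¹`. Thus
`G (A ∇ B)⁻¹ G = A ! B`, and uniqueness for the pair `(A ∇ B, A ! B)` yields `G`.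
-/

variable {H : Type*} [NormedAddCommGroup H] [InnerProductSpace ℂ H] [CompleteSpace H]

/-- Real power `A^r` of a bounded operator, via the continuous functional calculus. -/
noncomputable def opRpow (A : H →L[ℂ] H) (r : ℝ) : H →L[ℂ] H :=
  cfc (fun x : ℝ => x ^ r) A

/-- The weighted operator geometric mean
`A ♯_μ B = A^{1/2} (A^{-1/2} B A^{-1/2})^μ A^{1/2}`. -/
noncomputable def wgm (μ : ℝ) (A B : H →L[ℂ] H) : H →L[ℂ] H :=
  opRpow A (1/2) * opRpow (opRpow A (-(1/2)) * B * opRpow A (-(1/2))) μ * opRpow A (1/2)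

/-- The operator geometric mean `A ♯ B`. -/
noncomputable def geomMean (A B : H →L[ℂ] H) : H →L[ℂ] H := wgm (1/2) A B

/-- The operator arithmetic mean `A ∇ B = (A + B)/2`. -/
noncomputable def arithMean (A B : H →L[ℂ] H) : H →L[ℂ] H := ((1 : ℝ)/2) • (A + B)

/-- The operator harmonic mean `A ! B = ((A⁻¹ + B⁻¹)/2)⁻¹`. -/
noncomputable def harmMean (A B : H →L[ℂ] H) : H →L[ℂ] H :=
  Ring.inverse (((1 : ℝ)/2) • (Ring.inverse A + Ring.inverse B))

open scoped Ring

section Riccati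

variable {M₀ : Type*} [MonoidWithZero M₀]

theorem Ring.mul_inverse_mul_eq_of_mul_inverse_mul_eq {g a b : M₀} (hg : IsUnit g)
    (ha : IsUnit a) (h : g * a⁻¹ʳ * g = b) : g * b⁻¹ʳ * g = a := by
  subst h
  rw [Ring.inverse_mul (.inl (hg.mul ha.ringInverse)), Ring.inverse_mul (.inl hg),
    Ring.inverse_inverse ha]
  simp only [mul_assoc, Ring.mul_inverse_cancel_left _ _ hg, Ring.inverse_mul_cancel _ hg,
    mul_one]

theorem Ring.mul_inverse_smul_add_mul_of_mul_inverse_mul_eq {𝕜 R : Type*} [CommSemiring 𝕜]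
    [Ring R] [Algebra 𝕜 R] {g a b : R} (hg : IsUnit g) (ha : IsUnit a)
    (h : g * a⁻¹ʳ * g = b) (c : 𝕜) :
    g * (c • (a + b))⁻¹ʳ * g = (c • (a⁻¹ʳ + b⁻¹ʳ))⁻¹ʳ := by
  have hba : g * b⁻¹ʳ * g = a := Ring.mul_inverse_mul_eq_of_mul_inverse_mul_eq hg ha h
  have hconj : c • (a + b) = g * (c • (a⁻¹ʳ + b⁻¹ʳ)) * g := by
    rw [mul_smul_comm, smul_mul_assoc, mul_add, add_mul, h, hba, add_comm]
  rw [hconj, Ring.inverse_mul (.inr hg), Ring.inverse_mul (.inl hg)]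
  simp only [mul_assoc, Ring.mul_inverse_cancel_left _ _ hg, Ring.inverse_mul_cancel _ hg,
    mul_one]

end Riccati

section Rpow

variable {𝒜 : Type*} [CStarAlgebra 𝒜] [PartialOrder 𝒜] [StarOrderedRing 𝒜] {a : 𝒜}

lemma rpow_mul_rpow_neg_cancel_left (ha : IsStrictlyPositive a) (x : ℝ) (z : 𝒜) :
    a ^ x * (a ^ (-x) * z) = z := by
  rw [← mul_assoc, CFC.rpow_mul_rpow_neg x, one_mul]

lemma rpow_neg_mul_rpow_cancel_left (ha : IsStrictlyPositive a) (x : ℝ) (z : 𝒜) :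
    a ^ (-x) * (a ^ x * z) = z := by
  rw [← mul_assoc, CFC.rpow_neg_mul_rpow x, one_mul]

lemma rpow_mul_rpow_neg_conj_mul_rpow (ha : IsStrictlyPositive a) (x : ℝ) (z : 𝒜) :
    a ^ x * (a ^ (-x) * z * a ^ (-x)) * a ^ x = z := by
  simp only [mul_assoc, rpow_mul_rpow_neg_cancel_left ha, CFC.rpow_neg_mul_rpow x ha, mul_one]

lemma ringInverse_eq_rpow_neg_half_mul_rpow_neg_half (ha : IsStrictlyPositive a) :
    a⁻¹ʳ = a ^ (-(1/2) : ℝ) * a ^ (-(1/2) : ℝ) := by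
  rw [CFC.inverse_eq_rpow_neg_one, ← CFC.rpow_add ha.isUnit]
  norm_num

end Rpow

section GeomMean

variable {A B X : H →L[ℂ] H}

lemma opRpow_eq_rpow (hA : 0 ≤ A) (r : ℝ) : opRpow A r = A ^ r :=
  (CFC.rpow_eq_cfc_real hA).symm

lemma geomMean_eq_rpow_mul_sqrt_mul_rpow (hA : IsStrictlyPositive A) (hB : 0 ≤ B) :
    geomMean A B = A ^ (1/2 : ℝ) *
      CFC.sqrt (A ^ (-(1/2) : ℝ) * B * A ^ (-(1/2) : ℝ)) * A ^ (1/2 : ℝ) := by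
  have hC : 0 ≤ A ^ (-(1/2) : ℝ) * B * A ^ (-(1/2) : ℝ) :=
    conjugate_nonneg_of_nonneg hB CFC.rpow_nonneg
  rw [geomMean, wgm, opRpow_eq_rpow hA.nonneg, opRpow_eq_rpow hA.nonneg, opRpow_eq_rpow hC,
    CFC.sqrt_eq_rpow]

lemma geomMean_nonneg (hA : IsStrictlyPositive A) (hB : 0 ≤ B) : 0 ≤ geomMean A B := by
  rw [geomMean_eq_rpow_mul_sqrt_mul_rpow hA hB]
  exact conjugate_nonneg_of_nonneg (CFC.sqrt_nonneg _) CFC.rpow_nonneg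

lemma isUnit_geomMean (hA : IsStrictlyPositive A) (hB : IsStrictlyPositive B) :
    IsUnit (geomMean A B) := by
  rw [geomMean_eq_rpow_mul_sqrt_mul_rpow hA hB.nonneg]
  have hs : IsUnit (A ^ (1/2 : ℝ)) := hA.isUnit.cfcRpow _
  have ht : IsUnit (A ^ (-(1/2) : ℝ)) := hA.isUnit.cfcRpow _
  refine (hs.mul ?_).mul hs
  rw [CFC.isUnit_sqrt_iff _ (conjugate_nonneg_of_nonneg hB.nonneg CFC.rpow_nonneg)]
  exact (ht.mul hB.isUnit).mul ht

lemma geomMean_mul_ringInverse_mul_geomMean (hA : IsStrictlyPositive A) (hB : 0 ≤ B) :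
    geomMean A B * A⁻¹ʳ * geomMean A B = B := by
  rw [geomMean_eq_rpow_mul_sqrt_mul_rpow hA hB, ringInverse_eq_rpow_neg_half_mul_rpow_neg_half hA]
  set C := A ^ (-(1/2) : ℝ) * B * A ^ (-(1/2) : ℝ) with hC
  have hC₀ : 0 ≤ C := conjugate_nonneg_of_nonneg hB CFC.rpow_nonneg
  calc _ = A ^ (1/2 : ℝ) * (CFC.sqrt C * CFC.sqrt C) * A ^ (1/2 : ℝ) := by
        simp only [mul_assoc, rpow_mul_rpow_neg_cancel_left hA, rpow_neg_mul_rpow_cancel_left hA]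
    _ = B := by rw [CFC.sqrt_mul_sqrt_self C hC₀, hC, rpow_mul_rpow_neg_conj_mul_rpow hA]

lemma geomMean_eq_of_mul_ringInverse_mul_eq (hA : IsStrictlyPositive A) (hX : 0 ≤ X)
    (h : X * A⁻¹ʳ * X = B) : geomMean A B = X := by
  have hAinv : 0 ≤ A⁻¹ʳ := CFC.inverse_eq_rpow_neg_one hA ▸ CFC.rpow_nonneg
  have hB : 0 ≤ B := h ▸ conjugate_nonneg_of_nonneg hAinv hX
  have hsqrt : CFC.sqrt (A ^ (-(1/2) : ℝ) * B * A ^ (-(1/2) : ℝ)) =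
      A ^ (-(1/2) : ℝ) * X * A ^ (-(1/2) : ℝ) := by
    refine CFC.sqrt_unique ?_ (conjugate_nonneg_of_nonneg hX CFC.rpow_nonneg)
    rw [← h, ringInverse_eq_rpow_neg_half_mul_rpow_neg_half hA]
    simp only [mul_assoc]
  rw [geomMean_eq_rpow_mul_sqrt_mul_rpow hA hB, hsqrt, rpow_mul_rpow_neg_conj_mul_rpow hA]

end GeomMean

/-- For positive invertible operators, `(A ∇ B) ♯ (A ! B) = A ♯ B`. -/
theorem arith_harm_geomMean
    (A B : H →L[ℂ] H)
    (hA : 0 ≤ A) (hAu : IsUnit A) (hB : 0 ≤ B) (hBu : IsUnit B) :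
    geomMean (arithMean A B) (harmMean A B) = geomMean A B := by
  have hA' : IsStrictlyPositive A := hAu.isStrictlyPositive hA
  have hB' : IsStrictlyPositive B := hBu.isStrictlyPositive hB
  have hM : IsStrictlyPositive (arithMean A B) :=
    (isStrictlyPositive_add (.inl ⟨hA', hB⟩)).smul (by norm_num)
  refine geomMean_eq_of_mul_ringInverse_mul_eq hM (geomMean_nonneg hA' hB) ?_
  exact Ring.mul_inverse_smul_add_mul_of_mul_inverse_mul_eq (isUnit_geomMean hA' hB') hAu
    (geomMean_mul_ringInverse_mul_geomMean hA' hB) _
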